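/- arXiv:2504.04554 — 6 statements merged into one kernel-verified Lean document; each statement's English description precedes it below -/
import Mathlib

section
/- (Forward error bound for the approximate Sherman–Morrison–Woodbury formula.) Let A be an invertible n×n real matrix, let U, V be n×k real matrices, set λ = ‖U‖·‖V‖ and B = A + UVᵀ, and assume B is invertible. Assume the capacitance matrix I + Vᵀ A⁻¹ U is invertible with ‖(I + Vᵀ A⁻¹ U)⁻¹‖ ≤ α. Let X be an n×n matrix (an approximation of A⁻¹) with ‖X − A⁻¹‖ ≤ ε₁ where ε₁ < 1/(2λα); assume I + Vᵀ X U is invertible; and let Z be a k×k matrix with ‖Z − (I + Vᵀ X U)⁻¹‖ ≤ ε₂. Then ‖B⁻¹ − (X − X U Z Vᵀ X)‖ ≤ ε₁ + ε₁ λ α (2‖A⁻¹‖ + ε₁) + λ(‖A⁻¹‖ + ε₁)² (ε₂ + 2 ε₁ λ α²). -/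
open Matrix
open scoped Matrix.Norms.L2Operator

/-!
By Woodbury, `B⁻¹ = A⁻¹ - A⁻¹ U C⁻¹ Vᵀ A⁻¹` with `C = 1 + Vᵀ A⁻¹ U`. The capacitance matrix
`D = 1 + Vᵀ X U` differs from `C` by `Vᵀ (A⁻¹ - X) U`, of norm at most `λ ε₁`, and `2 λ ε₁ α < 1`;
the identity `D⁻¹ - C⁻¹ = D⁻¹ (C - D) C⁻¹` then gives `‖D⁻¹‖ ≤ 2α` (absorbing `‖D⁻¹‖` on the left)
and `‖D⁻¹ - C⁻¹‖ ≤ 2 ε₁ λ α²`, so `‖Z - C⁻¹‖ ≤ ε₂ + 2 ε₁ λ α²`. Finally the difference of the two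
Woodbury expressions splits into `A⁻¹ - X` and three five-fold products, each bounded by
submultiplicativity.
-/

section InversePerturbation

open scoped Ring

variable {R : Type*} [SeminormedRing R] {c d : R} {α δ : ℝ}

theorem norm_inverse_sub_inverse_le (h : IsUnit c ↔ IsUnit d) :
    ‖d⁻¹ʳ - c⁻¹ʳ‖ ≤ ‖d⁻¹ʳ‖ * ‖c - d‖ * ‖c⁻¹ʳ‖ := by
  rw [Ring.inverse_sub_inverse h.symm]
  exact norm_mul₃_le

theorem norm_inverse_le_two_mul (h : IsUnit c ↔ IsUnit d) (hα : ‖c⁻¹ʳ‖ ≤ α)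
    (hδ : ‖c - d‖ ≤ δ) (hδα : 2 * δ * α ≤ 1) : ‖d⁻¹ʳ‖ ≤ 2 * α := by
  have hδ0 : 0 ≤ δ := (norm_nonneg _).trans hδ
  have hdiff : ‖d⁻¹ʳ - c⁻¹ʳ‖ ≤ ‖d⁻¹ʳ‖ * δ * α :=
    (norm_inverse_sub_inverse_le h).trans (by gcongr)
  have htri : ‖d⁻¹ʳ‖ ≤ ‖c⁻¹ʳ‖ + ‖d⁻¹ʳ - c⁻¹ʳ‖ := norm_le_insert' _ _
  nlinarith [norm_nonneg d⁻¹ʳ]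

theorem norm_inverse_sub_inverse_le_of_two_mul_le_one (h : IsUnit c ↔ IsUnit d)
    (hα : ‖c⁻¹ʳ‖ ≤ α) (hδ : ‖c - d‖ ≤ δ) (hδα : 2 * δ * α ≤ 1) :
    ‖d⁻¹ʳ - c⁻¹ʳ‖ ≤ 2 * δ * α ^ 2 := by
  have hδ0 : 0 ≤ δ := (norm_nonneg _).trans hδ
  have hα0 : 0 ≤ α := (norm_nonneg _).trans hα
  have hd := norm_inverse_le_two_mul h hα hδ hδα
  calc ‖d⁻¹ʳ - c⁻¹ʳ‖ ≤ ‖d⁻¹ʳ‖ * ‖c - d‖ * ‖c⁻¹ʳ‖ := norm_inverse_sub_inverse_le h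
    _ ≤ (2 * α) * δ * α := by gcongr
    _ = 2 * δ * α ^ 2 := by ring

end InversePerturbation

namespace Matrix

variable {𝕜 l m n p q r : Type*} [RCLike 𝕜]
  [Fintype l] [Fintype m] [Fintype n] [Fintype p] [Fintype q] [Fintype r]
  [DecidableEq m] [DecidableEq n] [DecidableEq p] [DecidableEq q] [DecidableEq r]

theorem l2_opNorm_mul₃_le (P : Matrix l m 𝕜) (Q : Matrix m n 𝕜) (S : Matrix n p 𝕜) :
    ‖P * Q * S‖ ≤ ‖P‖ * ‖Q‖ * ‖S‖ :=
  (l2_opNorm_mul _ _).trans (by gcongr; exact l2_opNorm_mul _ _)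

theorem l2_opNorm_mul₅_le (P : Matrix l m 𝕜) (Q : Matrix m n 𝕜) (S : Matrix n p 𝕜)
    (T : Matrix p q 𝕜) (W : Matrix q r 𝕜) :
    ‖P * Q * S * T * W‖ ≤ ‖P‖ * ‖Q‖ * ‖S‖ * ‖T‖ * ‖W‖ :=
  (l2_opNorm_mul₃_le _ _ _).trans (by gcongr; exact l2_opNorm_mul₃_le _ _ _)

theorem l2_opNorm_transpose (P : Matrix m n ℝ) : ‖Pᵀ‖ = ‖P‖ := by
  rw [← conjTranspose_eq_transpose_of_trivial, l2_opNorm_conjTranspose]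

theorem l2_opNorm_one_add_mul_mul_sub_le (W : Matrix m n 𝕜) (Y X : Matrix n n 𝕜)
    (U : Matrix n m 𝕜) : ‖(1 + W * Y * U) - (1 + W * X * U)‖ ≤ ‖W‖ * ‖Y - X‖ * ‖U‖ := by
  rw [add_sub_add_left_eq_sub, ← Matrix.sub_mul, ← Matrix.mul_sub]
  exact l2_opNorm_mul₃_le _ _ _

end Matrix

section Woodbury

variable {R : Type*} [Ring R] {n k : Type*} [Fintype n] [Fintype k]

def woodbury (X : Matrix n n R) (U : Matrix n k R) (Z : Matrix k k R) (W : Matrix k n R) :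
    Matrix n n R :=
  X - X * U * Z * W * X

theorem woodbury_sub_woodbury (Y X : Matrix n n R) (U : Matrix n k R) (C Z : Matrix k k R)
    (W : Matrix k n R) :
    woodbury Y U C W - woodbury X U Z W =
      (Y - X) - ((Y - X) * U * C * W * Y + X * U * C * W * (Y - X) + X * U * (C - Z) * W * X) := by
  simp only [woodbury, Matrix.sub_mul, Matrix.mul_sub]
  abel

end Woodbury

theorem norm_woodbury_sub_woodbury_le {𝕜 n k : Type*} [RCLike 𝕜] [Fintype n] [Fintype k]
    [DecidableEq n] [DecidableEq k] (Y X : Matrix n n 𝕜) (U : Matrix n k 𝕜) (C Z : Matrix k k 𝕜)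
    (W : Matrix k n 𝕜) :
    ‖woodbury Y U C W - woodbury X U Z W‖ ≤
      ‖Y - X‖ + (‖Y - X‖ * ‖U‖ * ‖C‖ * ‖W‖ * ‖Y‖ + ‖X‖ * ‖U‖ * ‖C‖ * ‖W‖ * ‖Y - X‖ +
        ‖X‖ * ‖U‖ * ‖C - Z‖ * ‖W‖ * ‖X‖) := by
  rw [woodbury_sub_woodbury]
  refine (norm_sub_le _ _).trans (add_le_add_right (norm_add₃_le.trans ?_) _)
  gcongr <;> exact l2_opNorm_mul₅_le _ _ _ _ _

theorem smw_forward_error_general {n k : ℕ} (A : Matrix (Fin n) (Fin n) ℝ) (hA : IsUnit A)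
    (U V : Matrix (Fin n) (Fin k) ℝ) (lam : ℝ) (hlam : lam = ‖U‖ * ‖V‖)
    (B : Matrix (Fin n) (Fin n) ℝ) (hB : B = A + U * Vᵀ)
    (α : ℝ) (hcap : IsUnit ((1 : Matrix (Fin k) (Fin k) ℝ) + Vᵀ * A⁻¹ * U))
    (hα : ‖((1 : Matrix (Fin k) (Fin k) ℝ) + Vᵀ * A⁻¹ * U)⁻¹‖ ≤ α)
    (X : Matrix (Fin n) (Fin n) ℝ) (ε₁ ε₂ : ℝ)
    (hX : ‖X - A⁻¹‖ ≤ ε₁) (hε₁ : ε₁ < 1 / (2 * lam * α))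
    (hcapX : IsUnit ((1 : Matrix (Fin k) (Fin k) ℝ) + Vᵀ * X * U))
    (Z : Matrix (Fin k) (Fin k) ℝ)
    (hZ : ‖Z - ((1 : Matrix (Fin k) (Fin k) ℝ) + Vᵀ * X * U)⁻¹‖ ≤ ε₂) :
    ‖B⁻¹ - (X - X * U * Z * Vᵀ * X)‖ ≤
      ε₁ + ε₁ * lam * α * (2 * ‖A⁻¹‖ + ε₁) +
        lam * (‖A⁻¹‖ + ε₁) ^ 2 * (ε₂ + 2 * ε₁ * lam * α ^ 2) := by
  set C := (1 : Matrix (Fin k) (Fin k) ℝ) + Vᵀ * A⁻¹ * U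
  set D := (1 : Matrix (Fin k) (Fin k) ℝ) + Vᵀ * X * U
  have hε₁0 : 0 ≤ ε₁ := (norm_nonneg _).trans hX
  have hα0 : 0 ≤ α := (norm_nonneg _).trans hα
  have hsmall : 2 * (lam * ε₁) * α ≤ 1 := by
    have hpos : 0 < 2 * lam * α := one_div_pos.mp (hε₁0.trans_lt hε₁)
    linarith [(lt_div_iff₀ hpos).mp hε₁]
  have hB' : B⁻¹ = woodbury A⁻¹ U C⁻¹ Vᵀ := by
    rw [hB, woodbury]
    simpa only [Matrix.mul_one, inv_one] using
      add_mul_mul_inv_eq_sub A U 1 Vᵀ hA isUnit_one (by rwa [inv_one])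
  have hCD : ‖C - D‖ ≤ lam * ε₁ := by
    calc ‖C - D‖ ≤ ‖Vᵀ‖ * ‖A⁻¹ - X‖ * ‖U‖ := l2_opNorm_one_add_mul_mul_sub_le _ _ _ _
      _ ≤ ‖V‖ * ε₁ * ‖U‖ := by rw [l2_opNorm_transpose, norm_sub_rev]; gcongr
      _ = lam * ε₁ := by rw [hlam]; ring
  have hDC : ‖D⁻¹ - C⁻¹‖ ≤ 2 * (lam * ε₁) * α ^ 2 := by
    rw [nonsing_inv_eq_ringInverse] at hα
    simpa only [← nonsing_inv_eq_ringInverse] using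
      norm_inverse_sub_inverse_le_of_two_mul_le_one (iff_of_true hcap hcapX) hα hCD hsmall
  have hCZ : ‖C⁻¹ - Z‖ ≤ ε₂ + 2 * ε₁ * lam * α ^ 2 := by
    rw [norm_sub_rev]
    linarith [norm_sub_le_norm_sub_add_norm_sub Z D⁻¹ C⁻¹]
  have hXA : ‖X‖ ≤ ‖A⁻¹‖ + ε₁ := (norm_le_insert' X A⁻¹).trans (by gcongr)
  calc ‖B⁻¹ - woodbury X U Z Vᵀ‖
      ≤ ‖A⁻¹ - X‖ + (‖A⁻¹ - X‖ * ‖U‖ * ‖C⁻¹‖ * ‖Vᵀ‖ * ‖A⁻¹‖ +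
          ‖X‖ * ‖U‖ * ‖C⁻¹‖ * ‖Vᵀ‖ * ‖A⁻¹ - X‖ + ‖X‖ * ‖U‖ * ‖C⁻¹ - Z‖ * ‖Vᵀ‖ * ‖X‖) := by
        rw [hB']; exact norm_woodbury_sub_woodbury_le _ _ _ _ _ _
    _ ≤ ε₁ + (ε₁ * ‖U‖ * α * ‖V‖ * ‖A⁻¹‖ + (‖A⁻¹‖ + ε₁) * ‖U‖ * α * ‖V‖ * ε₁ +
          (‖A⁻¹‖ + ε₁) * ‖U‖ * (ε₂ + 2 * ε₁ * lam * α ^ 2) * ‖V‖ * (‖A⁻¹‖ + ε₁)) := by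
        have hCZ0 := (norm_nonneg _).trans hCZ
        rw [l2_opNorm_transpose, norm_sub_rev A⁻¹ X]
        gcongr
    _ = ε₁ + ε₁ * lam * α * (2 * ‖A⁻¹‖ + ε₁) +
          lam * (‖A⁻¹‖ + ε₁) ^ 2 * (ε₂ + 2 * ε₁ * lam * α ^ 2) := by
        rw [hlam]; ring

/-- Forward error bound for the approximate Sherman–Morrison–Woodbury formula. -/
theorem smw_forward_error {n k : ℕ} (A : Matrix (Fin n) (Fin n) ℝ) (hA : IsUnit A)
    (U V : Matrix (Fin n) (Fin k) ℝ) (lam : ℝ) (hlam : lam = ‖U‖ * ‖V‖)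
    (B : Matrix (Fin n) (Fin n) ℝ) (hB : B = A + U * Vᵀ) (hBinv : IsUnit B)
    (α : ℝ) (hcap : IsUnit ((1 : Matrix (Fin k) (Fin k) ℝ) + Vᵀ * A⁻¹ * U))
    (hα : ‖((1 : Matrix (Fin k) (Fin k) ℝ) + Vᵀ * A⁻¹ * U)⁻¹‖ ≤ α)
    (X : Matrix (Fin n) (Fin n) ℝ) (ε₁ ε₂ : ℝ)
    (hX : ‖X - A⁻¹‖ ≤ ε₁) (hε₁ : ε₁ < 1 / (2 * lam * α))
    (hcapX : IsUnit ((1 : Matrix (Fin k) (Fin k) ℝ) + Vᵀ * X * U))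
    (Z : Matrix (Fin k) (Fin k) ℝ)
    (hZ : ‖Z - ((1 : Matrix (Fin k) (Fin k) ℝ) + Vᵀ * X * U)⁻¹‖ ≤ ε₂) :
    ‖B⁻¹ - (X - X * U * Z * Vᵀ * X)‖ ≤
      ε₁ + ε₁ * lam * α * (2 * ‖A⁻¹‖ + ε₁) +
        lam * (‖A⁻¹‖ + ε₁) ^ 2 * (ε₂ + 2 * ε₁ * lam * α ^ 2) :=
  smw_forward_error_general A hA U V lam hlam B hB α hcap hα X ε₁ ε₂ hX hε₁ hcapX Z hZ
end

section
/- (Two-norm improvement of the Ghadiri–Peng–Vempala backward stability bound, case C = I.) Let ρ ≥ 1 and γ > 0 with γ ≤ ρ. Let à be an invertible n×n real matrix and U, V n×k real matrices such that à + UVᵀ is invertible, ‖U‖ ≤ γ, ‖V‖ ≤ γ, ‖Ã⁻¹‖ ≤ ρ, and ‖(à + UVᵀ)⁻¹‖ ≤ ρ. Let A be an n×n real matrix with ‖à − A‖ ≤ ε₁ < 1. Let Z be an invertible k×k matrix such that Z − Vᵀ Ã⁻¹ U is invertible and ‖Z⁻¹ − (I + Vᵀ Ã⁻¹ U)⁻¹‖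 ≤ ε₂ with ε₂ ≤ 1/(512 ρ⁷). Then the matrix Ã⁻¹ − Ã⁻¹ U Z⁻¹ Vᵀ Ã⁻¹ is invertible and ‖(Ã⁻¹ − Ã⁻¹ U Z⁻¹ Vᵀ Ã⁻¹)⁻¹ − (A + U Vᵀ)‖ ≤ 512 ε₂ ρ¹⁴ + ε₁. -/
/-!
Write `B = Ã + UVᵀ` and `W = I + Vᵀ Ã⁻¹ U`. By the Woodbury identity and `B Ã⁻¹ U = U W`, the
approximate inverse factors as `B⁻¹ (I - F)` with `F = U W (Z⁻¹ - W⁻¹) Vᵀ Ã⁻¹`, and `‖F‖ ≤ 1/2`.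
Its inverse is `(I - F)⁻¹ B`, and since `Vᵀ Ã⁻¹ B = W Vᵀ`,
`(I - F)⁻¹ B - B = (I - F)⁻¹ F B = (I - F)⁻¹ U W (Z⁻¹ - W⁻¹) W Vᵀ`.
Neither `F` nor this difference involves `‖Ã‖`, which the hypotheses do not control; the
triangle inequality with `‖Ã - A‖ ≤ ε₁` finishes the proof.
-/

open Matrix
open scoped Matrix.Norms.L2Operator

namespace NormedRing

variable {R : Type*} [NormedRing R] [HasSummableGeomSeries R]

theorem norm_inverse_one_sub_le (h1 : ‖(1 : R)‖ ≤ 1) {t : R} (ht : ‖t‖ < 1) :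
    ‖Ring.inverse (1 - t)‖ ≤ (1 - ‖t‖)⁻¹ := by
  rw [← geom_series_eq_inverse t ht]
  linarith [tsum_geometric_le_of_norm_lt_one t ht]

end NormedRing

namespace Matrix

section Algebra

variable {α : Type*} [CommRing α] {n k : Type*} [Fintype n] [DecidableEq n] [DecidableEq k]

noncomputable def capacitance (A : Matrix n n α) (U : Matrix n k α) (V : Matrix k n α) :
    Matrix k k α :=
  1 + V * A⁻¹ * U

variable [Fintype k] {A : Matrix n n α} (U : Matrix n k α) (V : Matrix k n α)

theorem add_mul_mul_inv_mul (hA : IsUnit A) :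
    (A + U * V) * (A⁻¹ * U) = U * capacitance A U V := by
  rw [Matrix.add_mul, mul_nonsing_inv_cancel_left _ _ ((isUnit_iff_isUnit_det A).mp hA),
    capacitance, Matrix.mul_add, Matrix.mul_one]
  simp only [Matrix.mul_assoc]

theorem mul_inv_mul_add (hA : IsUnit A) :
    V * A⁻¹ * (A + U * V) = capacitance A U V * V := by
  rw [Matrix.mul_add, Matrix.mul_assoc, nonsing_inv_mul _ ((isUnit_iff_isUnit_det A).mp hA),
    Matrix.mul_one, capacitance, Matrix.add_mul, Matrix.one_mul]
  simp only [Matrix.mul_assoc]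

theorem isUnit_capacitance (hA : IsUnit A) (hB : IsUnit (A + U * V)) :
    IsUnit (capacitance A U V) := by
  rw [isUnit_iff_isUnit_det] at hA hB ⊢
  rw [det_add_mul U V hA] at hB
  exact isUnit_of_mul_isUnit_right hB

theorem inv_sub_mul_mul_inv_eq (hA : IsUnit A) (hB : IsUnit (A + U * V)) (Y : Matrix k k α) :
    A⁻¹ - A⁻¹ * U * Y * V * A⁻¹ = (A + U * V)⁻¹ *
      (1 - U * capacitance A U V * (Y - (capacitance A U V)⁻¹) * V * A⁻¹) := by
  set W := capacitance A U V
  have hBU :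
      (A + U * V)⁻¹ * (U * W * (Y - W⁻¹) * V * A⁻¹) = A⁻¹ * U * (Y - W⁻¹) * V * A⁻¹ := by
    rw [show U * W * (Y - W⁻¹) * V * A⁻¹ = U * W * ((Y - W⁻¹) * V * A⁻¹) by
        simp only [Matrix.mul_assoc],
      ← add_mul_mul_inv_mul U V hA, ← Matrix.mul_assoc,
      nonsing_inv_mul_cancel_left _ _ ((isUnit_iff_isUnit_det _).mp hB)]
    simp only [Matrix.mul_assoc]
  have woodbury : (A + U * V)⁻¹ = A⁻¹ - A⁻¹ * U * W⁻¹ * V * A⁻¹ := by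
    have h := add_mul_mul_inv_eq_sub A U 1 V hA isUnit_one
      (by rw [inv_one]; exact isUnit_capacitance U V hA hB)
    rwa [Matrix.mul_one, inv_one] at h
  rw [Matrix.mul_sub, Matrix.mul_one, hBU, woodbury]
  simp only [Matrix.mul_sub, Matrix.sub_mul]
  abel

theorem mul_capacitance_mul_inv_mul_add (hA : IsUnit A) (X : Matrix k k α) :
    U * capacitance A U V * X * V * A⁻¹ * (A + U * V) =
      U * capacitance A U V * X * capacitance A U V * V := by
  simp only [Matrix.mul_assoc, ← mul_inv_mul_add U V hA]

theorem inv_inv_mul_one_sub_sub {B F : Matrix n n α} (hB : IsUnit B) (hF : IsUnit (1 - F)) :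
    (B⁻¹ * (1 - F))⁻¹ - B = (1 - F)⁻¹ * (F * B) := by
  rw [mul_inv_rev, nonsing_inv_nonsing_inv _ ((isUnit_iff_isUnit_det B).mp hB)]
  calc (1 - F)⁻¹ * B - B = (1 - F)⁻¹ * B - (1 - F)⁻¹ * (1 - F) * B := by
        rw [nonsing_inv_mul _ ((isUnit_iff_isUnit_det _).mp hF), Matrix.one_mul]
    _ = (1 - F)⁻¹ * (F * B) := by
        simp only [Matrix.mul_sub, Matrix.sub_mul, Matrix.mul_one, Matrix.mul_assoc]
        abel

end Algebra

section L2OpNorm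

variable {𝕜 : Type*} [RCLike 𝕜] {n k : Type*} [Fintype n] [DecidableEq n] [Fintype k]
  [DecidableEq k]

theorem l2_opNorm_one_le : ‖(1 : Matrix n n 𝕜)‖ ≤ 1 := by
  rw [← l2_opNorm_toEuclideanCLM, map_one]
  exact ContinuousLinearMap.norm_id_le

theorem l2_opNorm_inv_one_sub_le {F : Matrix n n 𝕜} (hF : ‖F‖ < 1) :
    ‖(1 - F)⁻¹‖ ≤ (1 - ‖F‖)⁻¹ := by
  rw [nonsing_inv_eq_ringInverse]
  exact NormedRing.norm_inverse_one_sub_le l2_opNorm_one_le hF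

theorem l2_opNorm_capacitance_le (A : Matrix n n 𝕜) (U : Matrix n k 𝕜) (V : Matrix k n 𝕜) :
    ‖capacitance A U V‖ ≤ 1 + ‖V‖ * ‖A⁻¹‖ * ‖U‖ := by
  refine (norm_add_le _ _).trans ?_
  gcongr
  · exact l2_opNorm_one_le
  · refine (l2_opNorm_mul _ _).trans ?_
    gcongr
    exact l2_opNorm_mul _ _

theorem isUnit_inv_sub_and_l2_opNorm_inv_sub_le {A : Matrix n n 𝕜} {U : Matrix n k 𝕜}
    {V : Matrix k n 𝕜} (hA : IsUnit A) (hB : IsUnit (A + U * V)) (Y : Matrix k k 𝕜)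
    (hsmall : ‖U‖ * ‖capacitance A U V‖ * ‖Y - (capacitance A U V)⁻¹‖ * ‖V‖ * ‖A⁻¹‖ < 1) :
    IsUnit (A⁻¹ - A⁻¹ * U * Y * V * A⁻¹) ∧
      ‖(A⁻¹ - A⁻¹ * U * Y * V * A⁻¹)⁻¹ - (A + U * V)‖ ≤
        (1 - ‖U‖ * ‖capacitance A U V‖ * ‖Y - (capacitance A U V)⁻¹‖ * ‖V‖ * ‖A⁻¹‖)⁻¹ *
          (‖U‖ * ‖capacitance A U V‖ * ‖Y - (capacitance A U V)⁻¹‖ * ‖capacitance A U V‖ *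
            ‖V‖) := by
  set W := capacitance A U V
  set F := U * W * (Y - W⁻¹) * V * A⁻¹
  have hF : ‖F‖ ≤ ‖U‖ * ‖W‖ * ‖Y - W⁻¹‖ * ‖V‖ * ‖A⁻¹‖ := by
    repeat' first | refine (l2_opNorm_mul _ _).trans ?_ | gcongr
  have hF1 : IsUnit (1 - F) := (Units.oneSub F (hF.trans_lt hsmall)).isUnit
  rw [inv_sub_mul_mul_inv_eq U V hA hB Y]
  refine ⟨(isUnit_nonsing_inv_iff.mpr hB).mul hF1, ?_⟩
  rw [inv_inv_mul_one_sub_sub hB hF1, mul_capacitance_mul_inv_mul_add U V hA]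
  refine (l2_opNorm_mul _ _).trans ?_
  gcongr
  · exact (l2_opNorm_inv_one_sub_le (hF.trans_lt hsmall)).trans (by gcongr)
  · repeat' first | refine (l2_opNorm_mul _ _).trans ?_ | gcongr

end L2OpNorm

end Matrix

theorem smw_two_norm_backward_stability_general {n k : ℕ} (ρ γ : ℝ)
    (hρ : 1 ≤ ρ) (hγρ : γ ≤ ρ)
    (At : Matrix (Fin n) (Fin n) ℝ) (hAt : IsUnit At)
    (U V : Matrix (Fin n) (Fin k) ℝ) (hAUV : IsUnit (At + U * Vᵀ))
    (hU : ‖U‖ ≤ γ) (hV : ‖V‖ ≤ γ)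
    (hAtinv : ‖At⁻¹‖ ≤ ρ)
    (A : Matrix (Fin n) (Fin n) ℝ) (ε₁ ε₂ : ℝ)
    (hA : ‖At - A‖ ≤ ε₁)
    (Z : Matrix (Fin k) (Fin k) ℝ)
    (hZinv : ‖Z⁻¹ - ((1 : Matrix (Fin k) (Fin k) ℝ) + Vᵀ * At⁻¹ * U)⁻¹‖ ≤ ε₂)
    (hε₂ : ε₂ ≤ 1 / (512 * ρ ^ 7)) :
    IsUnit (At⁻¹ - At⁻¹ * U * Z⁻¹ * Vᵀ * At⁻¹) ∧
      ‖(At⁻¹ - At⁻¹ * U * Z⁻¹ * Vᵀ * At⁻¹)⁻¹ - (A + U * Vᵀ)‖ ≤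
        512 * ε₂ * ρ ^ 14 + ε₁ := by
  have hγ : 0 ≤ γ := (norm_nonneg U).trans hU
  have hε₂0 : 0 ≤ ε₂ := (norm_nonneg _).trans hZinv
  have hε₂ρ : ε₂ * ρ ^ 7 ≤ 1 / 512 := by
    linarith [(le_div_iff₀ (by positivity)).mp hε₂]
  have hVt : ‖Vᵀ‖ ≤ γ := by
    rwa [← conjTranspose_eq_transpose_of_trivial, l2_opNorm_conjTranspose]
  set W := capacitance At U Vᵀ
  have hD : ‖Z⁻¹ - W⁻¹‖ ≤ ε₂ := hZinv
  have hW : ‖W‖ ≤ 2 * ρ ^ 3 := by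
    refine (l2_opNorm_capacitance_le At U Vᵀ).trans ?_
    have : ‖Vᵀ‖ * ‖At⁻¹‖ * ‖U‖ ≤ ρ * ρ * ρ := by gcongr <;> linarith
    nlinarith [one_le_pow₀ (n := 3) hρ]
  have hsmall : ‖U‖ * ‖W‖ * ‖Z⁻¹ - W⁻¹‖ * ‖Vᵀ‖ * ‖At⁻¹‖ ≤ 1 / 2 := calc
    _ ≤ ρ * (2 * ρ ^ 3) * ε₂ * ρ * ρ := by gcongr <;> linarith
    _ ≤ 2 * (ε₂ * ρ ^ 7) := by
      linarith [mul_le_mul_of_nonneg_left (pow_le_pow_right₀ hρ (by norm_num : 6 ≤ 7)) hε₂0]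
    _ ≤ 1 / 2 := by linarith
  obtain ⟨hunit, hdist⟩ :=
    isUnit_inv_sub_and_l2_opNorm_inv_sub_le hAt hAUV Z⁻¹ (hsmall.trans_lt (by norm_num))
  refine ⟨hunit, ?_⟩
  calc _ ≤ ‖(At⁻¹ - At⁻¹ * U * Z⁻¹ * Vᵀ * At⁻¹)⁻¹ - (At + U * Vᵀ)‖ + ‖At - A‖ := by
        rw [← add_sub_add_right_eq_sub At A (U * Vᵀ)]
        exact norm_sub_le_norm_sub_add_norm_sub _ _ _
    _ ≤ 2 * (ρ * (2 * ρ ^ 3) * ε₂ * (2 * ρ ^ 3) * ρ) + ε₁ := by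
        refine add_le_add (hdist.trans ?_) hA
        gcongr
        · exact inv_le_of_inv_le₀ two_pos (by linarith)
        all_goals linarith
    _ ≤ 512 * ε₂ * ρ ^ 14 + ε₁ := by
        have h8 := mul_le_mul_of_nonneg_left (pow_le_pow_right₀ hρ (by norm_num : 8 ≤ 14)) hε₂0
        linarith [mul_nonneg hε₂0 (pow_nonneg (zero_le_one.trans hρ) 14)]

/-- Two-norm improvement of the Ghadiri–Peng–Vempala backward stability bound (case C = I). -/
theorem smw_two_norm_backward_stability {n k : ℕ} (ρ γ : ℝ)
    (hρ : 1 ≤ ρ) (hγ : 0 < γ) (hγρ : γ ≤ ρ)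
    (At : Matrix (Fin n) (Fin n) ℝ) (hAt : IsUnit At)
    (U V : Matrix (Fin n) (Fin k) ℝ) (hAUV : IsUnit (At + U * Vᵀ))
    (hU : ‖U‖ ≤ γ) (hV : ‖V‖ ≤ γ)
    (hAtinv : ‖At⁻¹‖ ≤ ρ) (hAUVinv : ‖(At + U * Vᵀ)⁻¹‖ ≤ ρ)
    (A : Matrix (Fin n) (Fin n) ℝ) (ε₁ ε₂ : ℝ)
    (hA : ‖At - A‖ ≤ ε₁) (hε₁ : ε₁ < 1)
    (Z : Matrix (Fin k) (Fin k) ℝ) (hZ : IsUnit Z)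
    (hZS : IsUnit (Z - Vᵀ * At⁻¹ * U))
    (hZinv : ‖Z⁻¹ - ((1 : Matrix (Fin k) (Fin k) ℝ) + Vᵀ * At⁻¹ * U)⁻¹‖ ≤ ε₂)
    (hε₂ : ε₂ ≤ 1 / (512 * ρ ^ 7)) :
    IsUnit (At⁻¹ - At⁻¹ * U * Z⁻¹ * Vᵀ * At⁻¹) ∧
      ‖(At⁻¹ - At⁻¹ * U * Z⁻¹ * Vᵀ * At⁻¹)⁻¹ - (A + U * Vᵀ)‖ ≤
        512 * ε₂ * ρ ^ 14 + ε₁ :=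
  smw_two_norm_backward_stability_general ρ γ hρ hγρ At hAt U V hAUV hU hV hAtinv A ε₁ ε₂ hA Z hZinv
    hε₂
end

section
/- (Appendix intermediate bound: closeness of the approximate SMW inverse to the inverse of the perturbed matrix.) Let ρ ≥ 1 and γ > 0. Let à be an invertible n×n real matrix and U, V n×k real matrices such that à + UVᵀ is invertible, ‖U‖ ≤ γ, ‖V‖ ≤ γ, ‖Ã⁻¹‖ ≤ ρ, and ‖(à + UVᵀ)⁻¹‖ ≤ ρ. Let Z be an invertible k×k matrix such that Z − Vᵀ Ã⁻¹ U is invertible and ‖Z⁻¹ − (I + Vᵀ Ã⁻¹ U)⁻¹‖ ≤ ε₂, where ε₂ ≤ 1/(2(1 + γ²ρ)) and 2(γ²ρ + 1)² ε₂ ≤ 1/(2(1 + γ)² ρ). Then ‖(Ã⁻¹ − Ã⁻¹ U Z⁻¹ Vᵀ Ã⁻¹) − (à + U Vᵀ)⁻¹‖ ≤ 4 (1 + γ)⁴ ρ² (γ² ρ + 1)² ε₂. -/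
open Matrix
open scoped Matrix.Norms.L2Operator

/-!
By the Woodbury identity, `(Ã + UVᵀ)⁻¹ = Ã⁻¹ - Ã⁻¹ U C⁻¹ Vᵀ Ã⁻¹` with the capacitance matrix
`C = I + Vᵀ Ã⁻¹ U`, which is invertible by the matrix determinant lemma. Hence the error of the
approximate inverse is `Ã⁻¹ U (C⁻¹ - Z⁻¹) Vᵀ Ã⁻¹`, whose norm is at most `ρ² γ² ε₂` by
submultiplicativity, and `γ² ≤ 4 (1 + γ)⁴`, `1 ≤ (γ² ρ + 1)²` give the stated bound.
-/

namespace Matrix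

section Woodbury

variable {m k α : Type*} [Fintype m] [DecidableEq m] [Fintype k] [DecidableEq k] [CommRing α]
  {A : Matrix m m α} {U : Matrix m k α} {V : Matrix k m α}

theorem isUnit_one_add_mul_inv_mul (hA : IsUnit A) (hAUV : IsUnit (A + U * V)) :
    IsUnit (1 + V * A⁻¹ * U) := by
  rw [isUnit_iff_isUnit_det] at hA hAUV ⊢
  rw [det_add_mul U V hA] at hAUV
  exact isUnit_of_mul_isUnit_right hAUV

theorem inv_add_mul_eq_sub (hA : IsUnit A) (hAUV : IsUnit (A + U * V)) :
    (A + U * V)⁻¹ = A⁻¹ - A⁻¹ * U * (1 + V * A⁻¹ * U)⁻¹ * V * A⁻¹ := by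
  simpa using add_mul_mul_inv_eq_sub A U 1 V hA isUnit_one
    (by simpa using isUnit_one_add_mul_inv_mul hA hAUV)

theorem sub_mul_mul_inv_sub_inv_add_mul (hA : IsUnit A) (hAUV : IsUnit (A + U * V))
    (W : Matrix k k α) :
    (A⁻¹ - A⁻¹ * U * W * V * A⁻¹) - (A + U * V)⁻¹ =
      A⁻¹ * U * ((1 + V * A⁻¹ * U)⁻¹ - W) * V * A⁻¹ := by
  rw [inv_add_mul_eq_sub hA hAUV]
  simp only [Matrix.mul_sub, Matrix.sub_mul]
  abel

end Woodbury

section L2OpNorm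

variable {𝕜 : Type*} [RCLike 𝕜] {l m n p q : Type*} [Fintype l] [Fintype m] [Fintype n]
  [Fintype p] [Fintype q] [DecidableEq l] [DecidableEq m] [DecidableEq n] [DecidableEq p]
  [DecidableEq q]

theorem l2_opNorm_mul_mul_mul_mul_le (A : Matrix l m 𝕜) (B : Matrix m n 𝕜) (C : Matrix n p 𝕜)
    (D : Matrix p q 𝕜) (E : Matrix q l 𝕜) :
    ‖A * B * C * D * E‖ ≤ ‖A‖ * ‖B‖ * ‖C‖ * ‖D‖ * ‖E‖ := by
  refine (l2_opNorm_mul _ _).trans (mul_le_mul_of_nonneg_right ?_ (norm_nonneg _))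
  refine (l2_opNorm_mul _ _).trans (mul_le_mul_of_nonneg_right ?_ (norm_nonneg _))
  refine (l2_opNorm_mul _ _).trans (mul_le_mul_of_nonneg_right ?_ (norm_nonneg _))
  exact l2_opNorm_mul _ _

theorem l2_opNorm_transpose_real (A : Matrix m n ℝ) : ‖Aᵀ‖ = ‖A‖ := by
  rw [← conjTranspose_eq_transpose_of_trivial, l2_opNorm_conjTranspose]

end L2OpNorm

end Matrix

theorem smw_approx_inverse_closeness_general {n k : ℕ} (ρ γ : ℝ)
    (At : Matrix (Fin n) (Fin n) ℝ) (hAt : IsUnit At)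
    (U V : Matrix (Fin n) (Fin k) ℝ) (hAUV : IsUnit (At + U * Vᵀ))
    (hU : ‖U‖ ≤ γ) (hV : ‖V‖ ≤ γ)
    (hAtinv : ‖At⁻¹‖ ≤ ρ)
    (Z : Matrix (Fin k) (Fin k) ℝ) (ε₂ : ℝ)
    (hZinv : ‖Z⁻¹ - ((1 : Matrix (Fin k) (Fin k) ℝ) + Vᵀ * At⁻¹ * U)⁻¹‖ ≤ ε₂) :
    ‖(At⁻¹ - At⁻¹ * U * Z⁻¹ * Vᵀ * At⁻¹) - (At + U * Vᵀ)⁻¹‖ ≤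
      4 * (1 + γ) ^ 4 * ρ ^ 2 * (γ ^ 2 * ρ + 1) ^ 2 * ε₂ := by
  have hρ : 0 ≤ ρ := (norm_nonneg _).trans hAtinv
  have hγ : 0 ≤ γ := (norm_nonneg _).trans hU
  have hε₂ : 0 ≤ ε₂ := (norm_nonneg _).trans hZinv
  have hγ_sq : γ ^ 2 ≤ 4 * (1 + γ) ^ 4 := by
    nlinarith [pow_le_pow_left₀ hγ (by linarith : γ ≤ 1 + γ) 2]
  have hγρ : 1 ≤ (γ ^ 2 * ρ + 1) ^ 2 := one_le_pow₀ (by nlinarith [sq_nonneg γ])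
  rw [sub_mul_mul_inv_sub_inv_add_mul hAt hAUV]
  calc _ ≤ ‖At⁻¹‖ * ‖U‖ * ‖(1 + Vᵀ * At⁻¹ * U)⁻¹ - Z⁻¹‖ * ‖Vᵀ‖ * ‖At⁻¹‖ :=
        l2_opNorm_mul_mul_mul_mul_le _ _ _ _ _
    _ ≤ ρ * γ * ε₂ * γ * ρ := by
        rw [norm_sub_rev, l2_opNorm_transpose_real]
        gcongr
    _ = γ ^ 2 * 1 * (ρ ^ 2 * ε₂) := by ring
    _ ≤ 4 * (1 + γ) ^ 4 * (γ ^ 2 * ρ + 1) ^ 2 * (ρ ^ 2 * ε₂) := by gcongr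
    _ = 4 * (1 + γ) ^ 4 * ρ ^ 2 * (γ ^ 2 * ρ + 1) ^ 2 * ε₂ := by ring

/-- Appendix intermediate bound: closeness of the approximate SMW inverse to the
inverse of the perturbed matrix. -/
theorem smw_approx_inverse_closeness {n k : ℕ} (ρ γ : ℝ) (hρ : 1 ≤ ρ) (hγ : 0 < γ)
    (At : Matrix (Fin n) (Fin n) ℝ) (hAt : IsUnit At)
    (U V : Matrix (Fin n) (Fin k) ℝ) (hAUV : IsUnit (At + U * Vᵀ))
    (hU : ‖U‖ ≤ γ) (hV : ‖V‖ ≤ γ)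
    (hAtinv : ‖At⁻¹‖ ≤ ρ) (hAUVinv : ‖(At + U * Vᵀ)⁻¹‖ ≤ ρ)
    (Z : Matrix (Fin k) (Fin k) ℝ) (hZ : IsUnit Z)
    (hZS : IsUnit (Z - Vᵀ * At⁻¹ * U)) (ε₂ : ℝ)
    (hZinv : ‖Z⁻¹ - ((1 : Matrix (Fin k) (Fin k) ℝ) + Vᵀ * At⁻¹ * U)⁻¹‖ ≤ ε₂)
    (hε₂ : ε₂ ≤ 1 / (2 * (1 + γ ^ 2 * ρ)))
    (hε₂' : 2 * (γ ^ 2 * ρ + 1) ^ 2 * ε₂ ≤ 1 / (2 * (1 + γ) ^ 2 * ρ)) :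
    ‖(At⁻¹ - At⁻¹ * U * Z⁻¹ * Vᵀ * At⁻¹) - (At + U * Vᵀ)⁻¹‖ ≤
      4 * (1 + γ) ^ 4 * ρ ^ 2 * (γ ^ 2 * ρ + 1) ^ 2 * ε₂ :=
  smw_approx_inverse_closeness_general ρ γ At hAt U V hAUV hU hV hAtinv Z ε₂ hZinv
end

section
/- (Tightness of the inverse-perturbation lemma for general matrices.) Let N be an invertible n×n real matrix, let σ > 0, and let u, v be unit vectors in ℝⁿ such that N v = σ u and Nᵀ u = σ v (i.e., u and v are a pair of left/right singular vectors of N with singular value σ). Set M = N + (σ/2) u vᵀ. Then M is invertible and ‖M⁻¹ − N⁻¹‖ = (1/3)·σ⁻¹. -/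
/-!
By the Sherman–Morrison formula, `(N + x yᵀ)⁻¹ = N⁻¹ - (1 + yᵀ N⁻¹ x)⁻¹ (N⁻¹ x)(yᵀ N⁻¹)`.
For `x = (σ/2) u`, `y = v` the singular-pair relations give `N⁻¹ x = v / 2`, `yᵀ N⁻¹ = uᵀ / σ`
and `1 + yᵀ N⁻¹ x = 3/2`, so `M⁻¹ - N⁻¹ = -(3σ)⁻¹ v uᵀ`, a rank-one matrix whose spectral norm
is `‖v‖ ‖u‖ / (3σ)`.
-/

open Matrix
open scoped Matrix.Norms.L2Operator

namespace Matrix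

section ShermanMorrison

variable {n α : Type*} [Fintype n] [DecidableEq n] [Field α]

theorem add_vecMulVec_mul_sub_smul_vecMulVec {A : Matrix n n α} (hA : IsUnit A) (x y : n → α)
    (h : 1 + y ⬝ᵥ A⁻¹ *ᵥ x ≠ 0) :
    (A + vecMulVec x y) *
      (A⁻¹ - (1 + y ⬝ᵥ A⁻¹ *ᵥ x)⁻¹ • vecMulVec (A⁻¹ *ᵥ x) (y ᵥ* A⁻¹)) = 1 := by
  set c := (1 + y ⬝ᵥ A⁻¹ *ᵥ x)⁻¹
  have hAA : A * A⁻¹ = 1 := mul_nonsing_inv A ((isUnit_iff_isUnit_det A).mp hA)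
  have hc : 1 - c * (1 + y ⬝ᵥ A⁻¹ *ᵥ x) = 0 := by rw [inv_mul_cancel₀ h, sub_self]
  rw [add_mul, mul_sub, mul_sub, hAA, mul_smul_comm, mul_smul_comm, mul_vecMulVec, mulVec_mulVec,
    hAA, one_mulVec, vecMulVec_mul, vecMulVec_mul_vecMulVec, vecMulVec_smul, smul_smul]
  calc 1 - c • vecMulVec x (y ᵥ* A⁻¹)
        + (vecMulVec x (y ᵥ* A⁻¹) - (c * (y ⬝ᵥ A⁻¹ *ᵥ x)) • vecMulVec x (y ᵥ* A⁻¹))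
      = 1 + (1 - c * (1 + y ⬝ᵥ A⁻¹ *ᵥ x)) • vecMulVec x (y ᵥ* A⁻¹) := by module
    _ = 1 := by rw [hc, zero_smul, add_zero]

theorem isUnit_add_vecMulVec {A : Matrix n n α} (hA : IsUnit A) (x y : n → α)
    (h : 1 + y ⬝ᵥ A⁻¹ *ᵥ x ≠ 0) : IsUnit (A + vecMulVec x y) :=
  (isUnit_iff_isUnit_det _).mpr
    (isUnit_det_of_right_inverse (add_vecMulVec_mul_sub_smul_vecMulVec hA x y h))

theorem inv_add_vecMulVec {A : Matrix n n α} (hA : IsUnit A) (x y : n → α)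
    (h : 1 + y ⬝ᵥ A⁻¹ *ᵥ x ≠ 0) :
    (A + vecMulVec x y)⁻¹ =
      A⁻¹ - (1 + y ⬝ᵥ A⁻¹ *ᵥ x)⁻¹ • vecMulVec (A⁻¹ *ᵥ x) (y ᵥ* A⁻¹) :=
  inv_eq_right_inv (add_vecMulVec_mul_sub_smul_vecMulVec hA x y h)

theorem inv_mulVec_eq_inv_smul {A : Matrix n n α} (hA : IsUnit A) {x y : n → α} {c : α}
    (hc : c ≠ 0) (h : A *ᵥ x = c • y) : A⁻¹ *ᵥ y = c⁻¹ • x := by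
  rw [← inv_smul_smul₀ hc y, ← h, mulVec_smul, mulVec_mulVec,
    nonsing_inv_mul A ((isUnit_iff_isUnit_det A).mp hA), one_mulVec]

theorem vecMul_inv_eq_inv_smul {A : Matrix n n α} (hA : IsUnit A) {x y : n → α} {c : α}
    (hc : c ≠ 0) (h : x ᵥ* A = c • y) : y ᵥ* A⁻¹ = c⁻¹ • x := by
  rw [← inv_smul_smul₀ hc y, ← h, ← smul_vecMul, vecMul_vecMul,
    mul_nonsing_inv A ((isUnit_iff_isUnit_det A).mp hA), vecMul_one]

end ShermanMorrison

theorem l2_opNorm_vecMulVec {𝕜 m n : Type*} [RCLike 𝕜] [Fintype m] [Fintype n] [DecidableEq n]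
    (x : EuclideanSpace 𝕜 m) (y : EuclideanSpace 𝕜 n) :
    ‖vecMulVec ⇑x (star ⇑y)‖ = ‖x‖ * ‖y‖ := by
  rw [l2_opNorm_def, ← InnerProductSpace.norm_rankOne (𝕜 := 𝕜) x y,
    ← InnerProductSpace.symm_toEuclideanLin_rankOne, LinearEquiv.trans_apply,
    LinearEquiv.apply_symm_apply]
  rfl

end Matrix

theorem EuclideanSpace.dotProduct_self_eq_norm_sq {ι : Type*} [Fintype ι]
    (x : EuclideanSpace ℝ ι) : ⇑x ⬝ᵥ ⇑x = ‖x‖ ^ 2 := by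
  rw [← real_inner_self_eq_norm_sq, EuclideanSpace.inner_eq_star_dotProduct, star_trivial]

/-- Tightness of the inverse-perturbation lemma for general matrices. -/
theorem smw_inverse_perturbation_tightness {n : ℕ}
    (N : Matrix (Fin n) (Fin n) ℝ) (hN : IsUnit N)
    (σ : ℝ) (hσ : 0 < σ) (u v : EuclideanSpace ℝ (Fin n))
    (hu : ‖u‖ = 1) (hv : ‖v‖ = 1)
    (hNv : N.mulVec v = σ • u) (hNTu : Nᵀ.mulVec u = σ • v)
    (M : Matrix (Fin n) (Fin n) ℝ)
    (hM : M = N + (σ / 2) • vecMulVec u v) :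
    IsUnit M ∧ ‖M⁻¹ - N⁻¹‖ = (1 / 3) * σ⁻¹ := by
  have hNinv_u : N⁻¹ *ᵥ u = σ⁻¹ • v := inv_mulVec_eq_inv_smul hN hσ.ne' hNv
  have hv_Ninv : v ᵥ* N⁻¹ = σ⁻¹ • u :=
    vecMul_inv_eq_inv_smul hN hσ.ne' (by rwa [← mulVec_transpose])
  have hden : 1 + v ⬝ᵥ N⁻¹ *ᵥ ((σ / 2) • u) = 3 / 2 := by
    rw [mulVec_smul, hNinv_u, smul_smul, dotProduct_smul,
      EuclideanSpace.dotProduct_self_eq_norm_sq, hv, smul_eq_mul]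
    field_simp
    norm_num
  have hden_ne : 1 + v ⬝ᵥ N⁻¹ *ᵥ ((σ / 2) • u) ≠ 0 := by rw [hden]; norm_num
  rw [← smul_vecMulVec] at hM
  refine ⟨hM ▸ isUnit_add_vecMulVec hN _ _ hden_ne, ?_⟩
  have hdiff : M⁻¹ - N⁻¹ = -(3 * σ)⁻¹ • vecMulVec v u := by
    rw [hM, inv_add_vecMulVec hN _ _ hden_ne, sub_sub_cancel_left, hden, mulVec_smul, hNinv_u,
      hv_Ninv]
    simp only [smul_vecMulVec, vecMulVec_smul, smul_smul, ← neg_smul]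
    congr 2
    field_simp
  rw [hdiff, norm_smul, ← star_trivial (u : Fin n → ℝ), l2_opNorm_vecMulVec, hu, hv, norm_neg,
    Real.norm_of_nonneg (by positivity)]
  ring
end

section
/- (Exact backward-error identity for the approximate SMW inverse.) Let X be an invertible n×n real matrix, U, V n×k real matrices, and W an invertible k×k real matrix such that W⁻¹ − Vᵀ X U is invertible. Then the matrix X − X U W Vᵀ X is invertible and (X − X U W Vᵀ X)⁻¹ − (X⁻¹ + U Vᵀ) = U [ (W⁻¹ − Vᵀ X U)⁻¹ − I ] Vᵀ. -/
open Matrix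
open scoped Matrix.Norms.L2Operator

/-! With `S = W⁻¹ - Vᵀ X U`, the capacitance matrix of `X⁻¹ + U S⁻¹ Vᵀ` in the Woodbury identity
is `S + Vᵀ X U = W⁻¹`, so `X - X U W Vᵀ X` is the exact inverse of the rank-`k` update
`X⁻¹ + U S⁻¹ Vᵀ`; subtracting `X⁻¹ + U Vᵀ` leaves `U (S⁻¹ - 1) Vᵀ`. -/

namespace Matrix

variable {m n α : Type*} [Fintype m] [Fintype n] [DecidableEq m] [DecidableEq n] [CommRing α]

theorem isUnit_add_mul_mul {A : Matrix n n α} {U : Matrix n m α} {C : Matrix m m α}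
    {V : Matrix m n α} (hA : IsUnit A) (hC : IsUnit C) (hAC : IsUnit (C⁻¹ + V * A⁻¹ * U)) :
    IsUnit (A + U * C * V) := by
  obtain ⟨_⟩ := hA.nonempty_invertible
  obtain ⟨_⟩ := hC.nonempty_invertible
  obtain ⟨iAC⟩ := hAC.nonempty_invertible
  simp only [← invOf_eq_nonsing_inv] at iAC
  exact @isUnit_of_invertible _ _ _ (invertibleAddMulMul A U C V)

theorem isUnit_inv_add_mul_inv_mul_and_inv_eq_sub {X : Matrix n n α} {U : Matrix n m α}
    {W : Matrix m m α} {V : Matrix m n α}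
    (hX : IsUnit X) (hW : IsUnit W) (hS : IsUnit (W⁻¹ - V * X * U)) :
    IsUnit (X⁻¹ + U * (W⁻¹ - V * X * U)⁻¹ * V) ∧
      (X⁻¹ + U * (W⁻¹ - V * X * U)⁻¹ * V)⁻¹ = X - X * U * W * V * X := by
  have hXinv : IsUnit X⁻¹ := isUnit_nonsing_inv_iff.2 hX
  have hSinv : IsUnit (W⁻¹ - V * X * U)⁻¹ := isUnit_nonsing_inv_iff.2 hS
  have hcap : (W⁻¹ - V * X * U)⁻¹⁻¹ + V * X⁻¹⁻¹ * U = W⁻¹ := by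
    rw [nonsing_inv_nonsing_inv _ ((isUnit_iff_isUnit_det _).1 hS),
      nonsing_inv_nonsing_inv _ ((isUnit_iff_isUnit_det _).1 hX), sub_add_cancel]
  have hcap_unit : IsUnit ((W⁻¹ - V * X * U)⁻¹⁻¹ + V * X⁻¹⁻¹ * U) := by
    rw [hcap]
    exact isUnit_nonsing_inv_iff.2 hW
  refine ⟨isUnit_add_mul_mul hXinv hSinv hcap_unit, ?_⟩
  rw [add_mul_mul_inv_eq_sub _ _ _ _ hXinv hSinv hcap_unit, hcap,
    nonsing_inv_nonsing_inv _ ((isUnit_iff_isUnit_det _).1 hX),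
    nonsing_inv_nonsing_inv _ ((isUnit_iff_isUnit_det _).1 hW)]

end Matrix

/-- Exact backward-error identity for the approximate SMW inverse. -/
theorem smw_exact_backward_identity {n k : ℕ}
    (X : Matrix (Fin n) (Fin n) ℝ) (hX : IsUnit X)
    (U V : Matrix (Fin n) (Fin k) ℝ)
    (W : Matrix (Fin k) (Fin k) ℝ) (hW : IsUnit W)
    (hWinv : IsUnit (W⁻¹ - Vᵀ * X * U)) :
    IsUnit (X - X * U * W * Vᵀ * X) ∧
      (X - X * U * W * Vᵀ * X)⁻¹ - (X⁻¹ + U * Vᵀ) =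
        U * ((W⁻¹ - Vᵀ * X * U)⁻¹ - 1) * Vᵀ := by
  obtain ⟨hupdate, hinv⟩ := isUnit_inv_add_mul_inv_mul_and_inv_eq_sub hX hW hWinv
  rw [← hinv, isUnit_nonsing_inv_iff,
    nonsing_inv_nonsing_inv _ ((isUnit_iff_isUnit_det _).1 hupdate)]
  refine ⟨hupdate, ?_⟩
  simp only [Matrix.mul_sub, Matrix.sub_mul, Matrix.mul_one]
  abel
end

section
/- (Intermediate bound in the backward error proof.) Let A be an invertible n×n real matrix, let U, V be n×k real matrices, set λ = ‖U‖·‖V‖, and assume ‖I + Vᵀ A⁻¹ U‖ ≤ β. Let X be an n×n matrix with ‖X − A⁻¹‖ ≤ ε₁, and assume I + Vᵀ X U is invertible. Let W be an invertible k×k matrix with ‖W − (I + Vᵀ X U)⁻¹‖ ≤ ε₂ such that W⁻¹ − Vᵀ X U is invertible, ε₂ < 1/(2(β + λ ε₁)), and 2(β + λ ε₁)² ε₂ < 1/2. Then ‖(W⁻¹ − Vᵀ X U)⁻¹ − I‖ ≤ 4 (β + λ ε₁)² ε₂. -/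
open Matrix
open scoped Matrix.Norms.L2Operator

/-! Write `C = 1 + Vᵀ X U` and `E = W - C⁻¹`. Splitting `X = A⁻¹ + (X - A⁻¹)` gives
`‖C‖ ≤ β + λ ε₁ =: b`. The identity `C - W⁻¹ = C E W⁻¹ = C E C - C E (C - W⁻¹)` bounds
`D := C - W⁻¹` by itself, and as `‖C E‖ ≤ b ε₂ < 1/2` this yields `‖D‖ ≤ 2 b² ε₂`.
Finally `W⁻¹ - Vᵀ X U = 1 - D`, and `(1 - D)⁻¹ - 1 = D + D ((1 - D)⁻¹ - 1)` with `‖D‖ < 1/2`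
gives `‖(1 - D)⁻¹ - 1‖ ≤ 2 ‖D‖`. Both `W = C⁻¹ (1 + C E)` and `1 - D` are invertible by the
Neumann series. -/

section NormedRing

variable {R : Type*}

lemma norm_le_two_mul_of_eq_add_mul [SeminormedRing R] {x a b : R} (hx : x = a + b * x)
    (hb : ‖b‖ ≤ 1 / 2) : ‖x‖ ≤ 2 * ‖a‖ := by
  have : ‖x‖ ≤ ‖a‖ + ‖b‖ * ‖x‖ :=
    calc ‖x‖ = ‖a + b * x‖ := congrArg _ hx
      _ ≤ ‖a‖ + ‖b‖ * ‖x‖ := (norm_add_le _ _).trans (add_le_add_right (norm_mul_le _ _) _)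
  nlinarith [norm_nonneg x]

variable [NormedRing R] [HasSummableGeomSeries R]

lemma norm_inverse_one_sub_sub_one_le {d : R} (hd : ‖d‖ ≤ 1 / 2) :
    ‖Ring.inverse (1 - d) - 1‖ ≤ 2 * ‖d‖ := by
  have hunit : IsUnit (1 - d) := isUnit_one_sub_of_norm_lt_one (hd.trans_lt (by norm_num))
  have hsub : 1 - Ring.inverse (1 - d) = -d * Ring.inverse (1 - d) := by
    simpa only [Ring.inverse_one, one_mul, sub_sub_cancel_left] using
      Ring.inverse_sub_inverse (iff_of_true isUnit_one hunit)
  refine norm_le_two_mul_of_eq_add_mul ?_ hd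
  rw [mul_sub, mul_one, add_sub_cancel, ← neg_sub, hsub, neg_mul, neg_neg]

lemma norm_sub_inverse_le {c w : R} (hc : IsUnit c)
    (hcw : ‖c‖ * ‖w - Ring.inverse c‖ ≤ 1 / 2) :
    ‖c - Ring.inverse w‖ ≤ 2 * ‖c‖ ^ 2 * ‖w - Ring.inverse c‖ := by
  set e := w - Ring.inverse c
  have hce : ‖-(c * e)‖ ≤ 1 / 2 := (norm_neg (c * e)).trans_le ((norm_mul_le c e).trans hcw)
  have hw : IsUnit w := by
    have hfactor : w = Ring.inverse c * (1 - -(c * e)) := by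
      rw [sub_neg_eq_add, mul_add, mul_one, ← mul_assoc, Ring.inverse_mul_cancel c hc, one_mul]
      simp only [e, add_sub_cancel]
    rw [hfactor]
    exact hc.ringInverse.mul (isUnit_one_sub_of_norm_lt_one (hce.trans_lt (by norm_num)))
  have hsub : c - Ring.inverse w = c * e * Ring.inverse w := by
    simpa only [Ring.inverse_inverse hc] using
      Ring.inverse_sub_inverse (iff_of_true hc.ringInverse hw)
  calc ‖c - Ring.inverse w‖ ≤ 2 * ‖c * e * c‖ := by
        refine norm_le_two_mul_of_eq_add_mul ?_ hce
        rw [neg_mul, mul_sub (c * e), ← hsub]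
        abel
    _ ≤ 2 * ‖c‖ ^ 2 * ‖e‖ := by
        have := norm_mul₃_le (a := c) (b := e) (c := c)
        nlinarith

end NormedRing

lemma Matrix.l2_opNorm_transpose_mul_mul_le {l m n : Type*} [Fintype l] [DecidableEq l]
    [Fintype m] [DecidableEq m] [Fintype n] [DecidableEq n]
    (V : Matrix m n ℝ) (Z : Matrix m m ℝ) (U : Matrix m l ℝ) :
    ‖Vᵀ * Z * U‖ ≤ ‖V‖ * ‖Z‖ * ‖U‖ := by
  have hVt : ‖Vᵀ‖ = ‖V‖ := by
    rw [← conjTranspose_eq_transpose_of_trivial, l2_opNorm_conjTranspose]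
  calc ‖Vᵀ * Z * U‖ ≤ ‖Vᵀ‖ * ‖Z‖ * ‖U‖ :=
        (l2_opNorm_mul _ _).trans (by gcongr; exact l2_opNorm_mul _ _)
    _ = ‖V‖ * ‖Z‖ * ‖U‖ := by rw [hVt]

theorem smw_backward_intermediate_bound_general {n k : ℕ}
    (A : Matrix (Fin n) (Fin n) ℝ)
    (U V : Matrix (Fin n) (Fin k) ℝ) (lam : ℝ) (hlam : lam = ‖U‖ * ‖V‖)
    (β : ℝ) (hβ : ‖(1 : Matrix (Fin k) (Fin k) ℝ) + Vᵀ * A⁻¹ * U‖ ≤ β)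
    (X : Matrix (Fin n) (Fin n) ℝ) (ε₁ ε₂ : ℝ) (hXA : ‖X - A⁻¹‖ ≤ ε₁)
    (hcapX : IsUnit ((1 : Matrix (Fin k) (Fin k) ℝ) + Vᵀ * X * U))
    (W : Matrix (Fin k) (Fin k) ℝ)
    (hWcap : ‖W - ((1 : Matrix (Fin k) (Fin k) ℝ) + Vᵀ * X * U)⁻¹‖ ≤ ε₂)
    (hε₂ : ε₂ < 1 / (2 * (β + lam * ε₁)))
    (hε₂' : 2 * (β + lam * ε₁) ^ 2 * ε₂ < 1 / 2) :
    ‖(W⁻¹ - Vᵀ * X * U)⁻¹ - 1‖ ≤ 4 * (β + lam * ε₁) ^ 2 * ε₂ := by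
  set b := β + lam * ε₁
  set C : Matrix (Fin k) (Fin k) ℝ := 1 + Vᵀ * X * U
  have hC : ‖C‖ ≤ b := by
    have hsplit : C = (1 + Vᵀ * A⁻¹ * U) + Vᵀ * (X - A⁻¹) * U := by
      simp only [C, Matrix.mul_sub, Matrix.sub_mul]; abel
    have hpert : ‖V‖ * ‖X - A⁻¹‖ * ‖U‖ ≤ lam * ε₁ := by
      rw [hlam, mul_right_comm, mul_comm ‖V‖]; gcongr
    rw [hsplit]
    exact (norm_add_le _ _).trans
      (add_le_add hβ ((l2_opNorm_transpose_mul_mul_le _ _ _).trans hpert))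
  have hb : 0 < b := by
    refine ((norm_nonneg _).trans hC).lt_of_ne fun hb0 => ?_
    rw [← hb0, mul_zero, div_zero] at hε₂
    linarith [(norm_nonneg _).trans hWcap]
  have hCE : ‖C‖ * ‖W - C⁻¹‖ ≤ 1 / 2 := by
    rw [lt_div_iff₀ (by positivity)] at hε₂
    nlinarith [mul_le_mul hC hWcap (norm_nonneg _) hb.le]
  have hD : ‖C - W⁻¹‖ ≤ 2 * b ^ 2 * ε₂ := by
    simp only [nonsing_inv_eq_ringInverse] at hCE hWcap ⊢
    refine (norm_sub_inverse_le hcapX hCE).trans ?_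
    gcongr
  have hM : W⁻¹ - Vᵀ * X * U = 1 - (C - W⁻¹) := by simp only [C]; abel
  calc ‖(W⁻¹ - Vᵀ * X * U)⁻¹ - 1‖ ≤ 2 * ‖C - W⁻¹‖ := by
        rw [hM, nonsing_inv_eq_ringInverse]
        exact norm_inverse_one_sub_sub_one_le (hD.trans hε₂'.le)
    _ ≤ 4 * b ^ 2 * ε₂ := by linarith

/-- Intermediate bound in the backward error proof. -/
theorem smw_backward_intermediate_bound {n k : ℕ}
    (A : Matrix (Fin n) (Fin n) ℝ) (hA : IsUnit A)
    (U V : Matrix (Fin n) (Fin k) ℝ) (lam : ℝ) (hlam : lam = ‖U‖ * ‖V‖)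
    (β : ℝ) (hβ : ‖(1 : Matrix (Fin k) (Fin k) ℝ) + Vᵀ * A⁻¹ * U‖ ≤ β)
    (X : Matrix (Fin n) (Fin n) ℝ) (ε₁ ε₂ : ℝ) (hXA : ‖X - A⁻¹‖ ≤ ε₁)
    (hcapX : IsUnit ((1 : Matrix (Fin k) (Fin k) ℝ) + Vᵀ * X * U))
    (W : Matrix (Fin k) (Fin k) ℝ) (hW : IsUnit W)
    (hWcap : ‖W - ((1 : Matrix (Fin k) (Fin k) ℝ) + Vᵀ * X * U)⁻¹‖ ≤ ε₂)
    (hWinv : IsUnit (W⁻¹ - Vᵀ * X * U))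
    (hε₂ : ε₂ < 1 / (2 * (β + lam * ε₁)))
    (hε₂' : 2 * (β + lam * ε₁) ^ 2 * ε₂ < 1 / 2) :
    ‖(W⁻¹ - Vᵀ * X * U)⁻¹ - 1‖ ≤ 4 * (β + lam * ε₁) ^ 2 * ε₂ :=
  smw_backward_intermediate_bound_general A U V lam hlam β hβ X ε₁ ε₂ hXA hcapX W hWcap hε₂ hε₂'
end
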